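/- arXiv:1710.03262 — 2 statements merged into one kernel-verified Lean document; each statement's English description precedes it below -/
import Mathlib

section
/- Let F : [0,1]² → ℝ be continuous and let w solve the Dirichlet problem (5). Then for every (x,y) ∈ [0,1]², ‖F‖_{L∞([0,1]²)} − π² w(x,y) ≥ ‖F‖_{L∞([0,1]²)} · cosh(π(x − 1/2)) / cosh(π/2). -/
/-!
With `K = ‖F‖_∞`, the barrier `b(x) = K - K cosh (π (x - 1/2)) / cosh (π / 2)` solves
`-b'' + π² b = π² K` and is nonnegative on `[0,1]`. Hence `u = b - π² w` satisfies
`-Δu + π² u = π² (K - F) ≥ 0` in the square and `u ≥ 0` on its boundary, and the minimum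
principle for `-Δ + π²` gives `u ≥ 0`: at a negative minimum, necessarily interior, both pure
second derivatives of `u` would be nonnegative and `-Δu + π² u` negative.
-/

open Real Set

noncomputable section

/-- The closed unit square `[0,1]²`. -/
def unitSq : Set (ℝ × ℝ) := Icc 0 1 ×ˢ Icc 0 1

/-- The open unit square `(0,1)²`. -/
def unitOSq : Set (ℝ × ℝ) := Ioo 0 1 ×ˢ Ioo 0 1

/-- The `L∞([0,1]²)` norm of `F`. -/
def supNorm (F : ℝ × ℝ → ℝ) : ℝ := sSup ((fun p => |F p|) '' unitSq)

/-- Pure second partial derivative `∂_x² w` at `p`. -/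
def pdx2 (w : ℝ × ℝ → ℝ) (p : ℝ × ℝ) : ℝ := deriv (deriv (fun x => w (x, p.2))) p.1

/-- Pure second partial derivative `∂_y² w` at `p`. -/
def pdy2 (w : ℝ × ℝ → ℝ) (p : ℝ × ℝ) : ℝ := deriv (deriv (fun y => w (p.1, y))) p.2

/-- `p` lies on the boundary of the unit square. -/
def OnBdry (p : ℝ × ℝ) : Prop := p.1 = 0 ∨ p.1 = 1 ∨ p.2 = 0 ∨ p.2 = 1

/-- `w` solves the Dirichlet problem (5): `-Δw + π² w = F` in `(0,1)²`, `w = 0` on the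
boundary, with `w` continuous on `[0,1]²` and twice continuously differentiable inside. -/
def SolvesP5 (F w : ℝ × ℝ → ℝ) : Prop :=
  ContinuousOn w unitSq ∧ ContDiffOn ℝ 2 w unitOSq ∧
    (∀ p ∈ unitOSq, -(pdx2 w p + pdy2 w p) + π ^ 2 * w p = F p) ∧
    (∀ p ∈ unitSq, OnBdry p → w p = 0)

/-- The weights `γ_{ij}`: `2/3` if `i = j = N/2`, and `1` otherwise. -/
def gam (N i j : ℕ) : ℝ := if i = N / 2 ∧ j = N / 2 then 2 / 3 else 1

/-- Second difference in `x` on the grid of step `h = 1/N`. -/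
def dx2 (N : ℕ) (V : ℕ → ℕ → ℝ) (i j : ℕ) : ℝ :=
  (V (i + 1) j - 2 * V i j + V (i - 1) j) / ((N : ℝ)⁻¹ ^ 2)

/-- Second difference in `y` on the grid of step `h = 1/N`. -/
def dy2 (N : ℕ) (V : ℕ → ℕ → ℝ) (i j : ℕ) : ℝ :=
  (V i (j + 1) - 2 * V i j + V i (j - 1)) / ((N : ℝ)⁻¹ ^ 2)

/-- `W` solves the two-dimensional scheme (7). -/
def Scheme2d (N : ℕ) (F : ℝ × ℝ → ℝ) (W : ℕ → ℕ → ℝ) : Prop :=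
  (∀ i j, 0 < i → i < N → 0 < j → j < N →
    -(dx2 N W i j + dy2 N W i j) + gam N i j * π ^ 2 * W i j
      = gam N i j * F ((i : ℝ) / N, (j : ℝ) / N)) ∧
  (∀ i j, i ≤ N → j ≤ N → (i = 0 ∨ i = N ∨ j = 0 ∨ j = N) → W i j = 0)

/-- Regularity: third-order smoothness up to the boundary of the square and pure
fourth-order partial derivatives in `x` and `y` existing inside, with
`|∂_x⁴ w| + |∂_y⁴ w| ≤ M` there. -/
def Reg4 (w : ℝ × ℝ → ℝ) (M : ℝ) : Prop :=
  ContDiffOn ℝ 3 w unitSq ∧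
    ∀ p ∈ unitOSq,
      (∀ k < 4, DifferentiableAt ℝ (deriv^[k] fun x => w (x, p.2)) p.1) ∧
      (∀ k < 4, DifferentiableAt ℝ (deriv^[k] fun y => w (p.1, y)) p.2) ∧
      |deriv^[4] (fun x => w (x, p.2)) p.1| + |deriv^[4] (fun y => w (p.1, y)) p.2| ≤ M

open Filter Topology

lemma isOpen_unitOSq : IsOpen unitOSq := isOpen_Ioo.prod isOpen_Ioo

lemma isCompact_unitSq : IsCompact unitSq := isCompact_Icc.prod isCompact_Icc

lemma zero_mem_unitSq : (0 : ℝ × ℝ) ∈ unitSq :=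
  ⟨left_mem_Icc.2 zero_le_one, left_mem_Icc.2 zero_le_one⟩

lemma unitOSq_subset_unitSq : unitOSq ⊆ unitSq :=
  prod_mono Ioo_subset_Icc_self Ioo_subset_Icc_self

lemma mem_unitOSq_of_not_onBdry {p : ℝ × ℝ} (hp : p ∈ unitSq) (hb : ¬ OnBdry p) :
    p ∈ unitOSq := by
  simp only [OnBdry, not_or] at hb
  exact ⟨⟨hp.1.1.lt_of_ne' hb.1, hp.1.2.lt_of_ne hb.2.1⟩,
    ⟨hp.2.1.lt_of_ne' hb.2.2.1, hp.2.2.lt_of_ne hb.2.2.2⟩⟩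

lemma abs_le_supNorm {F : ℝ × ℝ → ℝ} (hF : ContinuousOn F unitSq) {q : ℝ × ℝ}
    (hq : q ∈ unitSq) : |F q| ≤ supNorm F :=
  le_csSup (isCompact_unitSq.image_of_continuousOn hF.abs).bddAbove (mem_image_of_mem _ hq)

/-- If `g'' (x₀) < 0`, the second derivative test makes the local minimum `x₀` also a local
maximum, so `g` is locally constant and `g'' (x₀) = 0` after all. -/
lemma IsLocalMin.deriv_deriv_nonneg {g : ℝ → ℝ} {x₀ : ℝ} (hmin : IsLocalMin g x₀)
    (hg : ContinuousAt g x₀) : 0 ≤ deriv (deriv g) x₀ := by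
  by_contra! hneg
  have hmax : IsLocalMax g x₀ := isLocalMax_of_deriv_deriv_neg hneg hmin.deriv_eq_zero hg
  have hconst : g =ᶠ[𝓝 x₀] fun _ => g x₀ := by
    filter_upwards [hmin, hmax] with x hx₁ hx₂ using le_antisymm hx₂ hx₁
  have hflat : deriv (deriv g) x₀ = 0 := by
    rw [hconst.deriv.deriv_eq]
    simp
  exact hneg.ne hflat

lemma IsLocalMin.pdx2_nonneg {u : ℝ × ℝ → ℝ} {p : ℝ × ℝ} (hmin : IsLocalMin u p)
    (hu : ContinuousAt u p) : 0 ≤ pdx2 u p := by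
  have hslice : ContinuousAt (fun x : ℝ => (x, p.2)) p.1 := by fun_prop
  exact IsLocalMin.deriv_deriv_nonneg (hmin.comp_continuous hslice) (hu.comp hslice)

lemma IsLocalMin.pdy2_nonneg {u : ℝ × ℝ → ℝ} {p : ℝ × ℝ} (hmin : IsLocalMin u p)
    (hu : ContinuousAt u p) : 0 ≤ pdy2 u p := by
  have hslice : ContinuousAt (fun y : ℝ => (p.1, y)) p.2 := by fun_prop
  exact IsLocalMin.deriv_deriv_nonneg (hmin.comp_continuous hslice) (hu.comp hslice)

theorem nonneg_of_neg_laplacian_add_nonneg {u : ℝ × ℝ → ℝ} {c : ℝ} (hc : 0 < c)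
    (hu : ContinuousOn u unitSq)
    (hL : ∀ p ∈ unitOSq, 0 ≤ -(pdx2 u p + pdy2 u p) + c * u p)
    (hbd : ∀ p ∈ unitSq, OnBdry p → 0 ≤ u p) : ∀ p ∈ unitSq, 0 ≤ u p := by
  obtain ⟨p₀, hp₀, hmin⟩ := isCompact_unitSq.exists_isMinOn ⟨0, zero_mem_unitSq⟩ hu
  suffices h : 0 ≤ u p₀ from fun p hp => h.trans (hmin hp)
  by_contra! hneg
  have hint : p₀ ∈ unitOSq :=
    mem_unitOSq_of_not_onBdry hp₀ fun hb => hneg.not_ge (hbd p₀ hp₀ hb)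
  have hnhds : unitSq ∈ 𝓝 p₀ :=
    mem_of_superset (isOpen_unitOSq.mem_nhds hint) unitOSq_subset_unitSq
  have hloc : IsLocalMin u p₀ := hmin.isLocalMin hnhds
  have hcont : ContinuousAt u p₀ := hu.continuousAt hnhds
  linarith [hL p₀ hint, hloc.pdx2_nonneg hcont, hloc.pdy2_nonneg hcont,
    mul_neg_of_pos_of_neg hc hneg]

lemma deriv_deriv_sub {f g : ℝ → ℝ} {x : ℝ} (hf : ContDiffAt ℝ 2 f x)
    (hg : ContDiffAt ℝ 2 g x) :
    deriv (deriv fun y => f y - g y) x = deriv (deriv f) x - deriv (deriv g) x := by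
  have hfirst : deriv (fun y => f y - g y) =ᶠ[𝓝 x] fun y => deriv f y - deriv g y := by
    filter_upwards [hf.eventually (by simp), hg.eventually (by simp)] with y hfy hgy
    exact deriv_fun_sub (hfy.differentiableAt (by simp)) (hgy.differentiableAt (by simp))
  rw [hfirst.deriv_eq]
  exact deriv_fun_sub ((hf.derivWithin (m := 1) (by norm_num)).differentiableAt one_ne_zero)
    ((hg.derivWithin (m := 1) (by norm_num)).differentiableAt one_ne_zero)

section PartialDerivatives

variable {u v : ℝ × ℝ → ℝ} {p : ℝ × ℝ}

lemma pdx2_sub (hu : ContDiffAt ℝ 2 u p) (hv : ContDiffAt ℝ 2 v p) :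
    pdx2 (fun q => u q - v q) p = pdx2 u p - pdx2 v p := by
  have hslice : ContDiffAt ℝ 2 (fun x : ℝ => (x, p.2)) p.1 := by fun_prop
  exact deriv_deriv_sub (hu.comp p.1 hslice) (hv.comp p.1 hslice)

lemma pdy2_sub (hu : ContDiffAt ℝ 2 u p) (hv : ContDiffAt ℝ 2 v p) :
    pdy2 (fun q => u q - v q) p = pdy2 u p - pdy2 v p := by
  have hslice : ContDiffAt ℝ 2 (fun y : ℝ => (p.1, y)) p.2 := by fun_prop
  exact deriv_deriv_sub (hu.comp p.2 hslice) (hv.comp p.2 hslice)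

lemma pdx2_const_mul (c : ℝ) (u : ℝ × ℝ → ℝ) (p : ℝ × ℝ) :
    pdx2 (fun q => c * u q) p = c * pdx2 u p := by
  simp only [pdx2, deriv_const_mul_field']

lemma pdy2_const_mul (c : ℝ) (u : ℝ × ℝ → ℝ) (p : ℝ × ℝ) :
    pdy2 (fun q => c * u q) p = c * pdy2 u p := by
  simp only [pdy2, deriv_const_mul_field']

lemma pdx2_comp_fst (f : ℝ → ℝ) (p : ℝ × ℝ) :
    pdx2 (fun q => f q.1) p = deriv (deriv f) p.1 :=
  rfl

lemma pdy2_comp_fst (f : ℝ → ℝ) (p : ℝ × ℝ) : pdy2 (fun q => f q.1) p = 0 := by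
  simp [pdy2]

end PartialDerivatives

def coshBarrier (a K x : ℝ) : ℝ := K - K * cosh (a * (x - 1 / 2)) / cosh (a / 2)

lemma contDiff_coshBarrier (a K : ℝ) : ContDiff ℝ 2 (coshBarrier a K) := by
  unfold coshBarrier
  fun_prop

lemma coshBarrier_nonneg {a K x : ℝ} (hK : 0 ≤ K) (hx : x ∈ Icc (0 : ℝ) 1) :
    0 ≤ coshBarrier a K x := by
  have hcosh : cosh (a * (x - 1 / 2)) ≤ cosh (a / 2) := by
    rw [cosh_le_cosh, abs_mul, abs_div, abs_two]
    have : |x - 1 / 2| ≤ 1 / 2 := abs_le.2 ⟨by linarith [hx.1], by linarith [hx.2]⟩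
    nlinarith [abs_nonneg a]
  have hratio : cosh (a * (x - 1 / 2)) / cosh (a / 2) ≤ 1 :=
    div_le_one_of_le₀ hcosh (cosh_pos _).le
  unfold coshBarrier
  rw [mul_div_assoc]
  nlinarith

lemma neg_deriv_deriv_coshBarrier_add (a K x : ℝ) :
    -deriv (deriv (coshBarrier a K)) x + a ^ 2 * coshBarrier a K x = a ^ 2 * K := by
  have hinner : ∀ y, HasDerivAt (fun y => a * (y - 1 / 2)) a y := fun y =>
    (((hasDerivAt_id y).sub_const (1 / 2)).const_mul a).congr_deriv (mul_one a)
  have hfirst : deriv (coshBarrier a K) =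
      fun y => -(K * (sinh (a * (y - 1 / 2)) * a) / cosh (a / 2)) := by
    funext y
    exact ((((hinner y).cosh.const_mul K).div_const _).const_sub K).deriv
  have hsecond : deriv (deriv (coshBarrier a K)) x =
      -(K * (cosh (a * (x - 1 / 2)) * a * a) / cosh (a / 2)) := by
    rw [hfirst]
    exact (((((hinner x).sinh.mul_const a).const_mul K).div_const _).neg).deriv
  rw [hsecond, coshBarrier]
  ring

/-- `‖F‖_∞ - π² w(x,y) ≥ ‖F‖_∞ cosh(π(x-1/2)) / cosh(π/2)` on `[0,1]²`. -/
theorem barrier_lower_bound (F w : ℝ × ℝ → ℝ)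
    (hF : ContinuousOn F unitSq) (hw : SolvesP5 F w) :
    ∀ p ∈ unitSq,
      supNorm F * Real.cosh (π * (p.1 - 1 / 2)) / Real.cosh (π / 2) ≤
        supNorm F - π ^ 2 * w p := by
  obtain ⟨hw_cont, hw_smooth, hw_eq, hw_bdry⟩ := hw
  set K := supNorm F
  have hFK : ∀ q ∈ unitSq, F q ≤ K := fun q hq => (le_abs_self _).trans (abs_le_supNorm hF hq)
  have hK : 0 ≤ K := (abs_nonneg _).trans (abs_le_supNorm hF zero_mem_unitSq)
  have hu : ∀ q ∈ unitSq, 0 ≤ coshBarrier π K q.1 - π ^ 2 * w q := by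
    refine nonneg_of_neg_laplacian_add_nonneg (c := π ^ 2) (by positivity) ?_ ?_ ?_
    · exact ((contDiff_coshBarrier π K).continuous.comp continuous_fst).continuousOn.sub
        (continuousOn_const.mul hw_cont)
    · intro q hq
      have hwq : ContDiffAt ℝ 2 (fun q => π ^ 2 * w q) q :=
        contDiffAt_const.mul (hw_smooth.contDiffAt (isOpen_unitOSq.mem_nhds hq))
      have hb : ContDiffAt ℝ 2 (fun q : ℝ × ℝ => coshBarrier π K q.1) q :=
        ((contDiff_coshBarrier π K).comp contDiff_fst).contDiffAt
      rw [pdx2_sub hb hwq, pdy2_sub hb hwq,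
        pdx2_const_mul, pdy2_const_mul, pdx2_comp_fst, pdy2_comp_fst]
      calc 0 ≤ π ^ 2 * (K - F q) :=
            mul_nonneg (sq_nonneg π) (sub_nonneg.2 (hFK q (unitOSq_subset_unitSq hq)))
        _ = _ := by
          linear_combination π ^ 2 * hw_eq q hq - neg_deriv_deriv_coshBarrier_add π K q.1
    · intro q hq hbdry
      rw [hw_bdry q hq hbdry, mul_zero, sub_zero]
      exact coshBarrier_nonneg hK hq.1
  intro p hp
  have := hu p hp
  unfold coshBarrier at this
  linarith
end
end

section
/- There exists a constant C₁ > 0 such that for every M > 0 there exists a constant C₂ > 0 with the following property. Let F̃ : [0,1]² → ℝ be continuous with F̃(1/2,1/2) ≥ 0, and let w : [0,1]² → ℝ be continuous on [0,1]², twice continuously differentiable on (0,1)², satisfy −(∂_x² w + ∂_y² w) = F̃ on (0,1)² and w = 0 on the boundary of [0,1]², and assume the partial derivatives of w up to order three extend continuously to [0,1]² and the pure fourth-order partial derivatives ∂_x⁴ w and ∂_y⁴ w exist on (0,1)² with |∂_x⁴ w| + |∂_y⁴ w| ≤ M there. Let N ≥ 4 be an even integer with h = 1/N, and let W̃ : {0,…,N}²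 → ℝ satisfy −(δ_x² W̃ + δ_y² W̃)_{ij} = γ_{ij}·F̃(x_i,y_j) for all i,j ∈ {1,…,N−1}, with W̃_{ij} = 0 whenever i or j lies in {0,N}. Then w(1/2,1/2) − W̃_{N/2,N/2} ≥ C₁·h²·(ln N)·F̃(1/2,1/2) − C₂·h². -/
open Real Set

noncomputable section

/-!
Let `e = w - W̃` on the grid. Taylor expansion along grid lines, with the bound `M` on the pure
fourth derivatives, turns the equations for `w` and `W̃` into `-Δₕ e ≥ (1 - γ) F̃ - M h² / 6`,
and `1 - γ` vanishes except at the centre `(c, c)`, where it is `1/3`. The barrier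
`h² (M/6 · q - a · V)` with `a = F̃(1/2,1/2)/96` absorbs both defects: `q` is a quadratic with
`Δₕ q = -1`, and `V = log(c² - 1/2) - log((i - c)² + (j - c)² - 1/2)` is a discrete logarithm,
subharmonic except at the centre, where its Laplacian is bounded below by `-32 h⁻²`. So
`e + barrier` is discretely superharmonic and nonnegative on the boundary, hence nonnegative by
the discrete minimum principle, and at the centre `V ≥ (log N)/2`.
-/

lemma natCast_div_mem_Icc {i N : ℕ} (h : i ≤ N) : (i : ℝ) / N ∈ Icc (0 : ℝ) 1 :=
  ⟨by positivity, div_le_one_of_le₀ (by exact_mod_cast h) (by positivity)⟩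

lemma natCast_div_mem_Ioo {i N : ℕ} (h₀ : 0 < i) (h : i < N) : (i : ℝ) / N ∈ Ioo (0 : ℝ) 1 :=
  ⟨div_pos (by exact_mod_cast h₀) (by exact_mod_cast h₀.trans h),
    (div_lt_one (by exact_mod_cast h₀.trans h)).2 (by exact_mod_cast h)⟩

lemma natCast_div_two_mul_self {c : ℕ} (hc : c ≠ 0) : (c : ℝ) / ((2 * c : ℕ) : ℝ) = 1 / 2 := by
  push_cast
  field_simp

lemma onBdry_natCast_div {N i j : ℕ} (hN : N ≠ 0) (hb : i = 0 ∨ i = N ∨ j = 0 ∨ j = N) :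
    OnBdry ((i : ℝ) / N, (j : ℝ) / N) := by
  rcases hb with rfl | rfl | rfl | rfl <;> simp [OnBdry, hN]

lemma gam_two_mul (c i j : ℕ) : gam (2 * c) i j = if i = c ∧ j = c then 2 / 3 else 1 := by
  simp [gam]

lemma nonpos_of_hasDerivAt_nonpos {f f' : ℝ → ℝ} {b : ℝ} (hb : 0 ≤ b)
    (hc : ContinuousOn f (Icc 0 b)) (hd : ∀ t ∈ Ioo 0 b, HasDerivAt f (f' t) t)
    (hf' : ∀ t ∈ Ioo 0 b, f' t ≤ 0) (h0 : f 0 = 0) : f b ≤ 0 := by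
  have hanti : AntitoneOn f (Icc 0 b) :=
    antitoneOn_of_hasDerivWithinAt_nonpos (convex_Icc 0 b) hc
      (fun t ht ↦ (hd t (by rwa [interior_Icc] at ht)).hasDerivWithinAt)
      (fun t ht ↦ hf' t (by rwa [interior_Icc] at ht))
  exact h0 ▸ hanti (left_mem_Icc.2 hb) (right_mem_Icc.2 hb) hb

lemma nonpos_on_Ioo_of_hasDerivAt_nonpos {f f' : ℝ → ℝ} {h : ℝ}
    (hd : ∀ t ∈ Ico 0 h, HasDerivAt f (f' t) t) (hf' : ∀ t ∈ Ioo 0 h, f' t ≤ 0)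
    (h0 : f 0 = 0) : ∀ t ∈ Ioo 0 h, f t ≤ 0 := fun _ ht ↦
  nonpos_of_hasDerivAt_nonpos ht.1.le
    (fun s hs ↦ (hd s ⟨hs.1, hs.2.trans_lt ht.2⟩).continuousAt.continuousWithinAt)
    (fun s hs ↦ hd s ⟨hs.1.le, hs.2.trans ht.2⟩) (fun s hs ↦ hf' s ⟨hs.1, hs.2.trans ht.2⟩) h0

lemma hasDerivAt_iterate_deriv {g : ℝ → ℝ} {k : ℕ} {s : ℝ}
    (hg : DifferentiableAt ℝ (deriv^[k] g) s) : HasDerivAt (deriv^[k] g) (deriv^[k + 1] g s) s := by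
  rw [Function.iterate_succ_apply']
  exact hg.hasDerivAt

theorem add_sub_two_mul_sub_sq_mul_deriv_deriv_le (g : ℝ → ℝ) {x h M : ℝ} (hh : 0 < h)
    (hd : ∀ s ∈ Ioo (x - h) (x + h), ∀ k < 4, DifferentiableAt ℝ (deriv^[k] g) s)
    (hM : ∀ s ∈ Ioo (x - h) (x + h), deriv^[4] g s ≤ M)
    (hc : ContinuousOn g (Icc (x - h) (x + h))) :
    g (x + h) + g (x - h) - 2 * g x - h ^ 2 * deriv (deriv g) x ≤ M * h ^ 4 / 12 := by
  have hmem : ∀ t ∈ Ioo (-h) h, x + t ∈ Ioo (x - h) (x + h) ∧ x - t ∈ Ioo (x - h) (x + h) :=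
    fun _ ⟨_, _⟩ ↦ ⟨⟨by linarith, by linarith⟩, ⟨by linarith, by linarith⟩⟩
  have hIco : Ico 0 h ⊆ Ioo (-h) h := fun t ht ↦ ⟨by linarith [ht.1], ht.2⟩
  have hIoo : Ioo 0 h ⊆ Ioo (-h) h := Ioo_subset_Ioo_left (by linarith)
  have hD : ∀ k < 4, ∀ s ∈ Ioo (x - h) (x + h), HasDerivAt (deriv^[k] g) (deriv^[k + 1] g s) s :=
    fun k hk s hs ↦ hasDerivAt_iterate_deriv (hd s hs k hk)
  set g₂ := deriv^[2] g x
  -- each `φₖ` vanishes at `0`, `φₖ' = φₖ₊₁`, and `φ₃' ≤ 0`; so all are `≤ 0` on `(0, h)`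
  let φ₃ : ℝ → ℝ := fun t ↦ deriv^[3] g (x + t) - deriv^[3] g (x - t) - 2 * M * t
  let φ₂ : ℝ → ℝ := fun t ↦ deriv^[2] g (x + t) + deriv^[2] g (x - t) - 2 * g₂ - M * t ^ 2
  let φ₁ : ℝ → ℝ := fun t ↦ deriv g (x + t) - deriv g (x - t) - 2 * g₂ * t - M * t ^ 3 / 3
  let φ₀ : ℝ → ℝ := fun t ↦ g (x + t) + g (x - t) - 2 * g x - g₂ * t ^ 2 - M * t ^ 4 / 12
  have d₃ : ∀ t ∈ Ioo (-h) h,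
      HasDerivAt φ₃ (deriv^[4] g (x + t) + deriv^[4] g (x - t) - 2 * M) t := fun t ht ↦ by
    have e := (((hD 3 (by norm_num) _ (hmem t ht).1).comp_const_add x t).sub
      ((hD 3 (by norm_num) _ (hmem t ht).2).comp_const_sub x t)).sub
      ((hasDerivAt_id t).const_mul (2 * M))
    exact e.congr_deriv (by ring)
  have d₂ : ∀ t ∈ Ioo (-h) h, HasDerivAt φ₂ (φ₃ t) t := fun t ht ↦ by
    have e := ((((hD 2 (by norm_num) _ (hmem t ht).1).comp_const_add x t).add
      ((hD 2 (by norm_num) _ (hmem t ht).2).comp_const_sub x t)).sub_const (2 * g₂)).sub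
      ((hasDerivAt_pow 2 t).const_mul M)
    exact e.congr_deriv (by norm_num [φ₃]; ring)
  have d₁ : ∀ t ∈ Ioo (-h) h, HasDerivAt φ₁ (φ₂ t) t := fun t ht ↦ by
    have e := ((((hD 1 (by norm_num) _ (hmem t ht).1).comp_const_add x t).sub
      ((hD 1 (by norm_num) _ (hmem t ht).2).comp_const_sub x t)).sub
      ((hasDerivAt_id t).const_mul (2 * g₂))).sub
      (((hasDerivAt_pow 3 t).const_mul M).div_const 3)
    exact e.congr_deriv (by norm_num [φ₂]; ring)
  have d₀ : ∀ t ∈ Ioo (-h) h, HasDerivAt φ₀ (φ₁ t) t := fun t ht ↦ by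
    have e := (((((hD 0 (by norm_num) _ (hmem t ht).1).comp_const_add x t).add
      ((hD 0 (by norm_num) _ (hmem t ht).2).comp_const_sub x t)).sub_const (2 * g x)).sub
      ((hasDerivAt_pow 2 t).const_mul g₂)).sub
      (((hasDerivAt_pow 4 t).const_mul M).div_const 12)
    exact e.congr_deriv (by norm_num [φ₁]; ring)
  have n₃ : ∀ t ∈ Ioo 0 h, φ₃ t ≤ 0 :=
    nonpos_on_Ioo_of_hasDerivAt_nonpos (fun t ht ↦ d₃ t (hIco ht))
      (fun t ht ↦ by linarith [hM _ (hmem t (hIoo ht)).1, hM _ (hmem t (hIoo ht)).2]) (by simp [φ₃])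
  have n₂ : ∀ t ∈ Ioo 0 h, φ₂ t ≤ 0 :=
    nonpos_on_Ioo_of_hasDerivAt_nonpos (fun t ht ↦ d₂ t (hIco ht)) n₃ (by simp [φ₂, g₂]; ring)
  have n₁ : ∀ t ∈ Ioo 0 h, φ₁ t ≤ 0 :=
    nonpos_on_Ioo_of_hasDerivAt_nonpos (fun t ht ↦ d₁ t (hIco ht)) n₂ (by simp [φ₁])
  have hφ₀ : ContinuousOn φ₀ (Icc 0 h) := by
    have hp : MapsTo (fun t ↦ x + t) (Icc 0 h) (Icc (x - h) (x + h)) :=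
      fun t ht ↦ ⟨by linarith [ht.1], by linarith [ht.2]⟩
    have hm : MapsTo (fun t ↦ x - t) (Icc 0 h) (Icc (x - h) (x + h)) :=
      fun t ht ↦ ⟨by linarith [ht.2], by linarith [ht.1]⟩
    exact ((((hc.comp (by fun_prop) hp).add (hc.comp (by fun_prop) hm)).sub continuousOn_const).sub
      (by fun_prop)).sub (by fun_prop)
  have := nonpos_of_hasDerivAt_nonpos hh.le hφ₀ (fun t ht ↦ d₀ t (hIoo ht)) n₁ (by simp [φ₀]; ring)
  simp only [φ₀, g₂] at this
  change _ - h ^ 2 * deriv^[2] g x ≤ _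
  linarith

lemma add_sub_two_mul_sub_sq_mul_deriv_deriv_natCast_div_le (f : ℝ → ℝ) {M : ℝ} {N i : ℕ}
    (hi₀ : 0 < i) (hi : i < N)
    (hd : ∀ s ∈ Ioo (0 : ℝ) 1, ∀ k < 4, DifferentiableAt ℝ (deriv^[k] f) s)
    (hM : ∀ s ∈ Ioo (0 : ℝ) 1, deriv^[4] f s ≤ M) (hc : ContinuousOn f (Icc 0 1)) :
    f ((i + 1 : ℕ) / N) + f ((i - 1 : ℕ) / N) - 2 * f (i / N) -
      (N : ℝ)⁻¹ ^ 2 * deriv (deriv f) (i / N) ≤ M * (N : ℝ)⁻¹ ^ 4 / 12 := by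
  have e_succ : ((i + 1 : ℕ) : ℝ) / N = i / N + (N : ℝ)⁻¹ := by push_cast; ring
  have e_pred : ((i - 1 : ℕ) : ℝ) / N = i / N - (N : ℝ)⁻¹ := by
    push_cast [Nat.one_le_iff_ne_zero.2 hi₀.ne']; ring
  have h_succ := natCast_div_mem_Icc (N := N) (Nat.succ_le_of_lt hi)
  have h_pred := natCast_div_mem_Icc (N := N) (Nat.sub_le i 1 |>.trans hi.le)
  rw [e_succ] at h_succ ⊢
  rw [e_pred] at h_pred ⊢
  have hIoo : Ioo (i / N - (N : ℝ)⁻¹) (i / N + (N : ℝ)⁻¹) ⊆ Ioo 0 1 :=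
    Ioo_subset_Ioo h_pred.1 h_succ.2
  have hN : (0 : ℝ) < (N : ℝ)⁻¹ := inv_pos.2 (by exact_mod_cast hi₀.trans hi)
  exact add_sub_two_mul_sub_sq_mul_deriv_deriv_le f hN (fun s hs ↦ hd s (hIoo hs))
    (fun s hs ↦ hM s (hIoo hs)) (hc.mono (Icc_subset_Icc h_pred.1 h_succ.2))

/-- The five-point Laplacian without the factor `h⁻²`. On `ℕ` the subtraction `i - 1` truncates,
so only interior indices are meaningful. -/
def gridLap {ι : Type*} [Add ι] [Sub ι] [One ι] (V : ι → ι → ℝ) (i j : ι) : ℝ :=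
  V (i + 1) j + V (i - 1) j + V i (j + 1) + V i (j - 1) - 4 * V i j

lemma gridLap_add {ι : Type*} [Add ι] [Sub ι] [One ι] (U V : ι → ι → ℝ) (i j : ι) :
    gridLap (U + V) i j = gridLap U i j + gridLap V i j := by
  simp only [gridLap, Pi.add_apply]
  ring

lemma gridLap_sub {ι : Type*} [Add ι] [Sub ι] [One ι] (U V : ι → ι → ℝ) (i j : ι) :
    gridLap (U - V) i j = gridLap U i j - gridLap V i j := by
  simp only [gridLap, Pi.sub_apply]
  ring

lemma gridLap_eq_mul_dx2_add_dy2 {N : ℕ} (hN : N ≠ 0) (V : ℕ → ℕ → ℝ) (i j : ℕ) :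
    gridLap V i j = (N : ℝ)⁻¹ ^ 2 * (dx2 N V i j + dy2 N V i j) := by
  simp only [gridLap, dx2, dy2]
  field_simp
  ring

def sample (N : ℕ) (w : ℝ × ℝ → ℝ) (i j : ℕ) : ℝ := w ((i : ℝ) / N, (j : ℝ) / N)

lemma gridLap_sample_le {w : ℝ × ℝ → ℝ} {M : ℝ} {N i j : ℕ} (hwc : ContinuousOn w unitSq)
    (hreg : Reg4 w M) (hi₀ : 0 < i) (hi : i < N) (hj₀ : 0 < j) (hj : j < N) :
    gridLap (sample N w) i j ≤
      (N : ℝ)⁻¹ ^ 2 * (pdx2 w ((i : ℝ) / N, (j : ℝ) / N) + pdy2 w ((i : ℝ) / N, (j : ℝ) / N)) +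
        M * (N : ℝ)⁻¹ ^ 4 / 6 := by
  have hx := add_sub_two_mul_sub_sq_mul_deriv_deriv_natCast_div_le (fun s ↦ w (s, (j : ℝ) / N))
    hi₀ hi
    (fun s hs ↦ (hreg.2 (s, _) ⟨hs, natCast_div_mem_Ioo hj₀ hj⟩).1)
    (fun s hs ↦ (le_abs_self _).trans ((le_add_of_nonneg_right (abs_nonneg _)).trans
      (hreg.2 (s, _) ⟨hs, natCast_div_mem_Ioo hj₀ hj⟩).2.2))
    (hwc.comp (by fun_prop) fun s hs ↦ ⟨hs, natCast_div_mem_Icc hj.le⟩)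
  have hy := add_sub_two_mul_sub_sq_mul_deriv_deriv_natCast_div_le (fun s ↦ w ((i : ℝ) / N, s))
    hj₀ hj
    (fun s hs ↦ (hreg.2 (_, s) ⟨natCast_div_mem_Ioo hi₀ hi, hs⟩).2.1)
    (fun s hs ↦ (le_abs_self _).trans ((le_add_of_nonneg_left (abs_nonneg _)).trans
      (hreg.2 (_, s) ⟨natCast_div_mem_Ioo hi₀ hi, hs⟩).2.2))
    (hwc.comp (by fun_prop) fun s hs ↦ ⟨natCast_div_mem_Icc hi.le, hs⟩)
  simp only [gridLap, sample, pdx2, pdy2] at hx hy ⊢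
  linarith

theorem nonneg_of_gridLap_nonpos {N : ℕ} {U : ℕ → ℕ → ℝ}
    (hint : ∀ i j, 0 < i → i < N → 0 < j → j < N → gridLap U i j ≤ 0)
    (hbd : ∀ i j, i ≤ N → j ≤ N → (i = 0 ∨ i = N ∨ j = 0 ∨ j = N) → 0 ≤ U i j) :
    ∀ i j, i ≤ N → j ≤ N → 0 ≤ U i j := by
  by_contra! ⟨i₀, j₀, hi₀, hj₀, hU₀⟩
  set S := Finset.range (N + 1) ×ˢ Finset.range (N + 1)
  have hS : ∀ p : ℕ × ℕ, p ∈ S ↔ p.1 ≤ N ∧ p.2 ≤ N := by simp [S]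
  obtain ⟨q, hqS, hq⟩ := S.exists_min_image (fun p ↦ U p.1 p.2) ⟨(i₀, j₀), (hS _).2 ⟨hi₀, hj₀⟩⟩
  have hmin : ∀ i j, i ≤ N → j ≤ N → U q.1 q.2 ≤ U i j :=
    fun i j hi hj ↦ hq (i, j) ((hS _).2 ⟨hi, hj⟩)
  -- a minimiser with the smallest first index is interior, so its left neighbour is a minimiser
  obtain ⟨r, hrT, hr⟩ := (S.filter fun p ↦ U p.1 p.2 = U q.1 q.2).exists_min_image Prod.fst
    ⟨q, Finset.mem_filter.2 ⟨hqS, rfl⟩⟩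
  obtain ⟨hrS, hrq⟩ := Finset.mem_filter.1 hrT
  obtain ⟨hr₁, hr₂⟩ := (hS r).1 hrS
  have hr_int : 0 < r.1 ∧ r.1 < N ∧ 0 < r.2 ∧ r.2 < N := by
    by_contra hb
    linarith [hbd r.1 r.2 hr₁ hr₂ (by omega), hmin i₀ j₀ hi₀ hj₀]
  obtain ⟨h₁, h₂, h₃, h₄⟩ := hr_int
  have hlap := hint r.1 r.2 h₁ h₂ h₃ h₄
  simp only [gridLap] at hlap
  have e₁ := hmin (r.1 + 1) r.2 (by omega) hr₂
  have e₂ := hmin r.1 (r.2 + 1) hr₁ (by omega)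
  have e₃ := hmin r.1 (r.2 - 1) hr₁ (by omega)
  have hleft : U (r.1 - 1) r.2 = U q.1 q.2 :=
    le_antisymm (by linarith) (hmin _ _ (by omega) hr₂)
  have := hr (r.1 - 1, r.2) (Finset.mem_filter.2 ⟨(hS _).2 ⟨by omega, hr₂⟩, hleft⟩)
  simp only at this
  omega

/-- A discrete logarithmic potential; the value `-8` at the origin is low enough to keep it
superharmonic at the neighbours of the origin. -/
def logPot (m n : ℤ) : ℝ :=
  if m = 0 ∧ n = 0 then -8 else Real.log ((m : ℝ) ^ 2 + (n : ℝ) ^ 2 - 1 / 2)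

lemma logPot_of_ne {m n : ℤ} (h : ¬(m = 0 ∧ n = 0)) :
    logPot m n = Real.log ((m : ℝ) ^ 2 + (n : ℝ) ^ 2 - 1 / 2) :=
  if_neg h

lemma one_le_sq_add_sq_of_ne {m n : ℤ} (h : ¬(m = 0 ∧ n = 0)) :
    (1 : ℝ) ≤ (m : ℝ) ^ 2 + (n : ℝ) ^ 2 := by
  have : (1 : ℤ) ≤ m ^ 2 + n ^ 2 := by
    rcases not_and_or.1 h with hm | hn
    · nlinarith [sq_nonneg n, Int.one_le_abs hm, sq_abs m]
    · nlinarith [sq_nonneg m, Int.one_le_abs hn, sq_abs n]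
  exact_mod_cast this

lemma gridLap_logPot_nonpos_of_two_le {m n : ℤ} (hs : 2 ≤ m ^ 2 + n ^ 2) :
    gridLap logPot m n ≤ 0 := by
  have h₀ : ¬(m = 0 ∧ n = 0) := by rintro ⟨rfl, rfl⟩; norm_num at hs
  have h₁ : ¬(m + 1 = 0 ∧ n = 0) := by rintro ⟨h, rfl⟩; nlinarith
  have h₂ : ¬(m - 1 = 0 ∧ n = 0) := by rintro ⟨h, rfl⟩; nlinarith
  have h₃ : ¬(m = 0 ∧ n + 1 = 0) := by rintro ⟨rfl, h⟩; nlinarith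
  have h₄ : ¬(m = 0 ∧ n - 1 = 0) := by rintro ⟨rfl, h⟩; nlinarith
  have p₁ := one_le_sq_add_sq_of_ne h₁
  have p₂ := one_le_sq_add_sq_of_ne h₂
  have p₃ := one_le_sq_add_sq_of_ne h₃
  have p₄ := one_le_sq_add_sq_of_ne h₄
  have hsR : (2 : ℝ) ≤ (m : ℝ) ^ 2 + (n : ℝ) ^ 2 := by exact_mod_cast hs
  simp only [gridLap, logPot_of_ne h₀, logPot_of_ne h₁, logPot_of_ne h₂, logPot_of_ne h₃,
    logPot_of_ne h₄]
  push_cast at p₁ p₂ p₃ p₄ ⊢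
  -- the neighbour values are `r + 1 ± 2m` and `r + 1 ± 2n`, where `r = m² + n² - 1/2`
  have hprod : ((m + 1 : ℝ) ^ 2 + n ^ 2 - 1 / 2) * ((m - 1 : ℝ) ^ 2 + n ^ 2 - 1 / 2) *
      ((m : ℝ) ^ 2 + (n + 1) ^ 2 - 1 / 2) * ((m : ℝ) ^ 2 + (n - 1) ^ 2 - 1 / 2) =
      ((m : ℝ) ^ 2 + n ^ 2 - 1 / 2) ^ 4 - 4 * ((m : ℝ) ^ 2 - n ^ 2) ^ 2 := by ring
  have q₁ : (0 : ℝ) < (m + 1) ^ 2 + n ^ 2 - 1 / 2 := by linarith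
  have q₂ : (0 : ℝ) < (m - 1) ^ 2 + n ^ 2 - 1 / 2 := by linarith
  have q₃ : (0 : ℝ) < m ^ 2 + (n + 1) ^ 2 - 1 / 2 := by linarith
  have q₄ : (0 : ℝ) < m ^ 2 + (n - 1) ^ 2 - 1 / 2 := by linarith
  have hlog := Real.log_le_log (by positivity) (hprod.trans_le (sub_le_self _ (by positivity)))
  rw [Real.log_mul (by positivity) q₄.ne', Real.log_mul (by positivity) q₃.ne',
    Real.log_mul q₁.ne' q₂.ne', Real.log_pow] at hlog
  push_cast at hlog
  linarith

lemma gridLap_logPot_nonpos_of_eq_one {m n : ℤ} (hs : m ^ 2 + n ^ 2 = 1) :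
    gridLap logPot m n ≤ 0 := by
  have hm : |m| ≤ 1 := by nlinarith [sq_abs m, abs_nonneg m, sq_nonneg n]
  have hn : |n| ≤ 1 := by nlinarith [sq_abs n, abs_nonneg n, sq_nonneg m]
  have l₁ := Real.log_le_sub_one_of_pos (by norm_num : (0 : ℝ) < 7 / 2)
  have l₂ := Real.log_le_sub_one_of_pos (by norm_num : (0 : ℝ) < 3 / 2)
  have l₃ := Real.one_sub_inv_le_log_of_pos (by norm_num : (0 : ℝ) < 1 / 2)
  obtain ⟨hm₁, hm₂⟩ := abs_le.1 hm
  obtain ⟨hn₁, hn₂⟩ := abs_le.1 hn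
  interval_cases m <;> interval_cases n <;> norm_num at hs <;>
    norm_num [gridLap, logPot] <;> linarith

lemma gridLap_logPot_le (m n : ℤ) :
    gridLap logPot m n ≤ if m = 0 ∧ n = 0 then 32 else 0 := by
  split_ifs with h
  · obtain ⟨rfl, rfl⟩ := h
    norm_num [gridLap, logPot]
    linarith [Real.log_nonpos (by norm_num : (0 : ℝ) ≤ 1 / 2) (by norm_num)]
  · have hs : (1 : ℝ) ≤ (m : ℝ) ^ 2 + (n : ℝ) ^ 2 := one_le_sq_add_sq_of_ne h
    rcases (show (1 : ℤ) ≤ m ^ 2 + n ^ 2 by exact_mod_cast hs).eq_or_lt with hs | hs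
    · exact gridLap_logPot_nonpos_of_eq_one hs.symm
    · exact gridLap_logPot_nonpos_of_two_le hs

def logBarrier (c i j : ℕ) : ℝ := Real.log ((c : ℝ) ^ 2 - 1 / 2) - logPot (i - c) (j - c)

lemma gridLap_logBarrier {c i j : ℕ} (hi : 0 < i) (hj : 0 < j) :
    gridLap (logBarrier c) i j = -gridLap logPot ((i : ℤ) - c) ((j : ℤ) - c) := by
  have e₁ : ((i + 1 : ℕ) : ℤ) - c = (i - c) + 1 := by push_cast; ring
  have e₂ : ((i - 1 : ℕ) : ℤ) - c = (i - c) - 1 := by omega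
  have e₃ : ((j + 1 : ℕ) : ℤ) - c = (j - c) + 1 := by push_cast; ring
  have e₄ : ((j - 1 : ℕ) : ℤ) - c = (j - c) - 1 := by omega
  simp only [gridLap, logBarrier, e₁, e₂, e₃, e₄]
  ring

lemma logBarrier_nonpos {c i j : ℕ} (hc : 0 < c) (hi : i ≤ 2 * c) (hj : j ≤ 2 * c)
    (hb : i = 0 ∨ i = 2 * c ∨ j = 0 ∨ j = 2 * c) : logBarrier c i j ≤ 0 := by
  have hne : ¬((i : ℤ) - c = 0 ∧ (j : ℤ) - c = 0) := by omega
  have hfar : (c : ℝ) ^ 2 ≤ ((i : ℤ) - c : ℤ) ^ 2 + ((j : ℤ) - c : ℤ) ^ 2 := by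
    push_cast
    rcases hb with rfl | rfl | rfl | rfl <;> push_cast <;> nlinarith
  have hc' : (1 : ℝ) ≤ c := by exact_mod_cast hc
  rw [logBarrier, logPot_of_ne hne, sub_nonpos]
  exact Real.log_le_log (by nlinarith) (by linarith)

lemma half_log_le_logBarrier_self {c : ℕ} (hc : 2 ≤ c) :
    Real.log ((2 * c : ℕ) : ℝ) / 2 ≤ logBarrier c c c := by
  have hc' : (2 : ℝ) ≤ c := by exact_mod_cast hc
  have hpos : (0 : ℝ) < (c : ℝ) ^ 2 - 1 / 2 := by nlinarith
  have hsq : ((2 * c : ℕ) : ℝ) ≤ ((c : ℝ) ^ 2 - 1 / 2) ^ 2 := by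
    push_cast
    nlinarith [mul_le_mul hc' hc' zero_le_two (by positivity)]
  have hlog := Real.log_le_log (by positivity) hsq
  rw [Real.log_pow, Nat.cast_ofNat] at hlog
  simp only [logBarrier, sub_self, logPot, and_self, if_true]
  linarith

def bubble (N i j : ℕ) : ℝ :=
  ((i : ℝ) / N * (1 - (i : ℝ) / N) + (j : ℝ) / N * (1 - (j : ℝ) / N)) / 4

lemma gridLap_bubble {N i j : ℕ} (hi : 0 < i) (hj : 0 < j) :
    gridLap (bubble N) i j = -(N : ℝ)⁻¹ ^ 2 := by
  simp only [gridLap, bubble]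
  push_cast [Nat.one_le_iff_ne_zero.2 hi.ne', Nat.one_le_iff_ne_zero.2 hj.ne']
  ring

lemma bubble_nonneg {N i j : ℕ} (hi : i ≤ N) (hj : j ≤ N) : 0 ≤ bubble N i j := by
  obtain ⟨hi₀, hi₁⟩ := natCast_div_mem_Icc hi
  obtain ⟨hj₀, hj₁⟩ := natCast_div_mem_Icc hj
  unfold bubble
  have := mul_nonneg hi₀ (sub_nonneg.2 hi₁)
  have := mul_nonneg hj₀ (sub_nonneg.2 hj₁)
  positivity

def barrier (c : ℕ) (M a : ℝ) (i j : ℕ) : ℝ :=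
  ((2 * c : ℕ) : ℝ)⁻¹ ^ 2 * (M / 6 * bubble (2 * c) i j - a * logBarrier c i j)

lemma gridLap_barrier_le {c : ℕ} {M a : ℝ} {i j : ℕ} (ha : 0 ≤ a) (hi : 0 < i) (hj : 0 < j) :
    gridLap (barrier c M a) i j ≤ ((2 * c : ℕ) : ℝ)⁻¹ ^ 2 *
      (96 * a * (1 - gam (2 * c) i j) - M / 6 * ((2 * c : ℕ) : ℝ)⁻¹ ^ 2) := by
  have hlap : gridLap (barrier c M a) i j = ((2 * c : ℕ) : ℝ)⁻¹ ^ 2 *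
      (M / 6 * gridLap (bubble (2 * c)) i j - a * gridLap (logBarrier c) i j) := by
    simp only [gridLap, barrier]
    ring
  have hpot : -gridLap (logBarrier c) i j ≤ 96 * (1 - gam (2 * c) i j) := by
    rw [gridLap_logBarrier hi hj, neg_neg, gam_two_mul]
    refine (gridLap_logPot_le _ _).trans_eq ?_
    simp only [sub_eq_zero, Nat.cast_inj]
    split_ifs <;> norm_num
  rw [hlap, gridLap_bubble hi hj]
  have := mul_le_mul_of_nonneg_left (mul_le_mul_of_nonneg_left hpot ha)
    (sq_nonneg ((2 * c : ℕ) : ℝ)⁻¹)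
  linarith

lemma barrier_nonneg {c : ℕ} {M a : ℝ} {i j : ℕ} (hM : 0 ≤ M) (ha : 0 ≤ a) (hc : 0 < c)
    (hi : i ≤ 2 * c) (hj : j ≤ 2 * c) (hb : i = 0 ∨ i = 2 * c ∨ j = 0 ∨ j = 2 * c) :
    0 ≤ barrier c M a i j := by
  have h₁ := mul_nonneg (div_nonneg hM (by norm_num : (0 : ℝ) ≤ 6)) (bubble_nonneg hi hj)
  have h₂ := mul_nonpos_of_nonneg_of_nonpos ha (logBarrier_nonpos hc hi hj hb)
  exact mul_nonneg (sq_nonneg _) (by linarith)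

lemma barrier_self_le {c : ℕ} {M a : ℝ} (ha : 0 ≤ a) (hc : 2 ≤ c) :
    barrier c M a c c ≤
      ((2 * c : ℕ) : ℝ)⁻¹ ^ 2 * (M / 48 - a / 2 * Real.log ((2 * c : ℕ) : ℝ)) := by
  have hb : bubble (2 * c) c c = 1 / 8 := by
    rw [bubble, natCast_div_two_mul_self (by omega)]
    norm_num
  have := mul_le_mul_of_nonneg_left (half_log_le_logBarrier_self hc) ha
  rw [barrier, hb]
  exact mul_le_mul_of_nonneg_left (by linarith) (sq_nonneg _)

lemma gridLap_sample_sub_add_barrier_nonpos {Ft w : ℝ × ℝ → ℝ} {Wt : ℕ → ℕ → ℝ} {M : ℝ}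
    {c i j : ℕ} (hF : 0 ≤ Ft (1 / 2, 1 / 2)) (hwc : ContinuousOn w unitSq) (hreg : Reg4 w M)
    (hPDE : ∀ p ∈ unitOSq, -(pdx2 w p + pdy2 w p) = Ft p)
    (hSch : -(dx2 (2 * c) Wt i j + dy2 (2 * c) Wt i j) =
      gam (2 * c) i j * Ft ((i : ℝ) / (2 * c : ℕ), (j : ℝ) / (2 * c : ℕ)))
    (hi₀ : 0 < i) (hi : i < 2 * c) (hj₀ : 0 < j) (hj : j < 2 * c) :
    gridLap (sample (2 * c) w - Wt + barrier c M (Ft (1 / 2, 1 / 2) / 96)) i j ≤ 0 := by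
  have hw := gridLap_sample_le hwc hreg hi₀ hi hj₀ hj
  have hW := gridLap_eq_mul_dx2_add_dy2 (N := 2 * c) (by omega) Wt i j
  have hB := gridLap_barrier_le (c := c) (M := M)
    (by positivity : 0 ≤ Ft (1 / 2, 1 / 2) / 96) hi₀ hj₀
  have hp := hPDE ((i : ℝ) / (2 * c : ℕ), (j : ℝ) / (2 * c : ℕ))
    ⟨natCast_div_mem_Ioo hi₀ hi, natCast_div_mem_Ioo hj₀ hj⟩
  have hγ : (1 - gam (2 * c) i j) * Ft ((i : ℝ) / (2 * c : ℕ), (j : ℝ) / (2 * c : ℕ)) =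
      (1 - gam (2 * c) i j) * Ft (1 / 2, 1 / 2) := by
    rw [gam_two_mul]
    split_ifs with h
    · rw [h.1, h.2, natCast_div_two_mul_self (by omega)]
    · ring
  rw [gridLap_add, gridLap_sub]
  linear_combination hw + hB - hW - ((2 * c : ℕ) : ℝ)⁻¹ ^ 2 * hp +
    ((2 * c : ℕ) : ℝ)⁻¹ ^ 2 * hSch - ((2 * c : ℕ) : ℝ)⁻¹ ^ 2 * hγ

/-- Lemma 3, after Andreev: the pointwise lower error bound
`w(1/2,1/2) - W̃_{N/2,N/2} ≥ C₁ h² ln N · F̃(1/2,1/2) - C₂ h²`. -/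
theorem andreev_lower_bound :
    ∃ C₁ > (0 : ℝ), ∀ M > (0 : ℝ), ∃ C₂ > (0 : ℝ),
      ∀ (Ft w : ℝ × ℝ → ℝ) (N : ℕ) (Wt : ℕ → ℕ → ℝ),
        ContinuousOn Ft unitSq → 0 ≤ Ft (1 / 2, 1 / 2) →
        ContinuousOn w unitSq → ContDiffOn ℝ 2 w unitOSq →
        (∀ p ∈ unitOSq, -(pdx2 w p + pdy2 w p) = Ft p) →
        (∀ p ∈ unitSq, OnBdry p → w p = 0) →
        Reg4 w M →
        4 ≤ N → Even N →
        (∀ i j, 0 < i → i < N → 0 < j → j < N →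
          -(dx2 N Wt i j + dy2 N Wt i j) = gam N i j * Ft ((i : ℝ) / N, (j : ℝ) / N)) →
        (∀ i j, i ≤ N → j ≤ N → (i = 0 ∨ i = N ∨ j = 0 ∨ j = N) → Wt i j = 0) →
        C₁ * (N : ℝ)⁻¹ ^ 2 * Real.log N * Ft (1 / 2, 1 / 2) - C₂ * (N : ℝ)⁻¹ ^ 2 ≤
          w (1 / 2, 1 / 2) - Wt (N / 2) (N / 2) := by
  refine ⟨1 / 192, by norm_num, fun M hM ↦ ⟨M / 48, by positivity, ?_⟩⟩
  intro Ft w N Wt _ hF hwc _ hPDE hbdry hreg hN hEven hSch hWbd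
  obtain ⟨c, rfl⟩ : ∃ c, N = 2 * c := ⟨N / 2, by obtain ⟨k, hk⟩ := hEven; omega⟩
  have ha : 0 ≤ Ft (1 / 2, 1 / 2) / 96 := by positivity
  have hU := nonneg_of_gridLap_nonpos
    (U := sample (2 * c) w - Wt + barrier c M (Ft (1 / 2, 1 / 2) / 96))
    (fun i j hi₀ hi hj₀ hj ↦ gridLap_sample_sub_add_barrier_nonpos hF hwc hreg hPDE
      (hSch i j hi₀ hi hj₀ hj) hi₀ hi hj₀ hj)
    (fun i j hi hj hb ↦ by
      have hw₀ := hbdry _ ⟨natCast_div_mem_Icc hi, natCast_div_mem_Icc hj⟩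
        (onBdry_natCast_div (by omega) hb)
      simp only [Pi.add_apply, Pi.sub_apply, sample, hw₀, hWbd i j hi hj hb, sub_zero, zero_add]
      exact barrier_nonneg hM.le ha (by omega) hi hj hb)
    c c (by omega) (by omega)
  have hcen := barrier_self_le (M := M) ha (by omega : 2 ≤ c)
  simp only [Pi.add_apply, Pi.sub_apply, sample, natCast_div_two_mul_self (by omega : c ≠ 0)] at hU
  rw [Nat.mul_div_cancel_left c two_pos]
  linear_combination hU + hcen
end
end
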